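/- Let f : ℍ → ℍ be the hyperbolic map f(z) = 2z, whose Denjoy–Wolff point is ∞. There exist a continuous curve δ : [0,∞) → ℍ landing at ∞ with arg(δ(t)) → 0 as t → ∞, and projections π_n of f^n(1) onto δ, such that π_1 = π_2 = 2√2; hence the sequence {d_ℍ(1, π_n)} is strictly increasing only eventually (the word 'eventually' cannot be omitted in the monotonicity theorem for hyperbolic maps). -/

import Mathlib

open Complex Filter Topology

/-- Pseudo-hyperbolic distance on the right half-plane ℍ = {Re z > 0}. -/
noncomputable def rhoH (z w : ℂ) : ℝ := ‖(z - w) / (z + (starRingEnd ℂ) w)‖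

/-- Hyperbolic distance on the right half-plane. -/
noncomputable def dH (z w : ℂ) : ℝ := (1/2) * Real.log ((1 + rhoH z w) / (1 - rhoH z w))

/-- `p` is a hyperbolic projection of `z` onto the curve `γ : [0,∞) → ℍ`. -/
def IsProjH (γ : ℝ → ℂ) (z p : ℂ) : Prop :=
  (∃ t ≥ (0:ℝ), p = γ t) ∧ ∀ t ≥ (0:ℝ), dH z p ≤ dH z (γ t)

/-- `f` is a hyperbolic holomorphic self-map of the right half-plane with
Denjoy–Wolff point ∞: it preserves ℍ, is holomorphic on ℍ, its iterates tend to ∞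
uniformly on compact subsets of ℍ, and `f(z)/z → c` for some `c > 1` as `z → ∞`
within every sector `{|arg z| < φ}`, `φ ∈ (0, π/2)`. -/
def HyperbolicAtInf (f : ℂ → ℂ) : Prop :=
  (∀ z : ℂ, 0 < z.re → 0 < (f z).re) ∧
  DifferentiableOn ℂ f {z : ℂ | 0 < z.re} ∧
  (∀ K : Set ℂ, K ⊆ {z : ℂ | 0 < z.re} → IsCompact K →
    ∀ M : ℝ, ∃ N : ℕ, ∀ n ≥ N, ∀ z ∈ K, M < ‖f^[n] z‖) ∧
  (∃ c : ℝ, 1 < c ∧ ∀ φ ∈ Set.Ioo (0:ℝ) (Real.pi/2), ∀ ε > (0:ℝ), ∃ R : ℝ,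
    ∀ z : ℂ, 0 < z.re → |z.arg| < φ → R < ‖z‖ →
      ‖f z / z - (c:ℂ)‖ < ε)

/-!
The number `2√2` is the hyperbolic midpoint of `f(1) = 2` and `f²(1) = 4` on the geodesic `ℝ₊`.
The hyperbolic disks centred at `2` and at `4` whose boundaries pass through `2√2` are tangent
there, with vertical common tangent. The half-parabola `δ(t) = 2√2 + t² + 2ti` leaves `2√2`
vertically and stays outside both disks, so `δ(0) = 2√2` is a projection of both `2` and `4`.
Projections of the other points `f^n(1)` exist by compactness, because `d_ℍ(z, w) → ∞` as `w → ∞`.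
-/

open ComplexConjugate

section PseudoHyperbolic

variable {z w w' : ℂ}

lemma normSq_add_conj_sub_normSq_sub (z w : ℂ) :
    normSq (z + conj w) - normSq (z - w) = 4 * z.re * w.re := by
  simp only [normSq_apply, add_re, add_im, sub_re, sub_im, conj_re, conj_im]
  ring

lemma normSq_add_conj_pos (hz : 0 < z.re) (hw : 0 < w.re) : 0 < normSq (z + conj w) := by
  nlinarith [normSq_add_conj_sub_normSq_sub z w, normSq_nonneg (z - w), mul_pos hz hw]

lemma rhoH_sq (z w : ℂ) : rhoH z w ^ 2 = normSq (z - w) / normSq (z + conj w) := by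
  rw [rhoH, Complex.sq_norm, normSq_div]

lemma rhoH_nonneg (z w : ℂ) : 0 ≤ rhoH z w := norm_nonneg _

lemma rhoH_lt_one (hz : 0 < z.re) (hw : 0 < w.re) : rhoH z w < 1 := by
  have hpos := normSq_add_conj_pos hz hw
  rw [← sq_lt_one_iff₀ (rhoH_nonneg z w), rhoH_sq, div_lt_one hpos]
  nlinarith [normSq_add_conj_sub_normSq_sub z w, mul_pos hz hw]

lemma dH_le_dH_of_rhoH_le (hz : 0 < z.re) (hw' : 0 < w'.re) (h : rhoH z w ≤ rhoH z w') :
    dH z w ≤ dH z w' := by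
  have h0 := rhoH_nonneg z w
  have h1 := rhoH_lt_one hz hw'
  unfold dH
  gcongr
  · exact div_pos (by linarith) (by linarith)
  · linarith

lemma half_log_norm_div_le_dH (hz : 0 < z.re) (hw : 0 < w.re) :
    1 / 2 * Real.log (‖w‖ / ‖z‖) ≤ dH z w := by
  set ρ := rhoH z w with hρ
  have hρ0 : 0 ≤ ρ := rhoH_nonneg z w
  have hρ1 : ρ < 1 := rhoH_lt_one hz hw
  have hz0 : 0 < ‖z‖ := norm_pos_iff.2 fun h => by simp [h] at hz
  have hw0 : 0 < ‖w‖ := norm_pos_iff.2 fun h => by simp [h] at hw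
  have hden : ‖z + conj w‖ ≠ 0 := by
    rw [norm_ne_zero_iff, ← normSq_pos]
    exact normSq_add_conj_pos hz hw
  have hgap : ‖w‖ - ‖z‖ ≤ ρ * (‖z‖ + ‖w‖) :=
    calc ‖w‖ - ‖z‖ ≤ ‖z - w‖ := by rw [norm_sub_rev]; exact norm_sub_norm_le w z
      _ = ρ * ‖z + conj w‖ := by rw [hρ, rhoH, norm_div, div_mul_cancel₀ _ hden]
      _ ≤ ρ * (‖z‖ + ‖w‖) := by
        gcongr
        exact (norm_add_le _ _).trans_eq (by rw [Complex.norm_conj])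
  have hratio : ‖w‖ / ‖z‖ ≤ (1 + ρ) / (1 - ρ) := by
    rw [div_le_div_iff₀ hz0 (by linarith)]
    linarith
  unfold dH
  gcongr

lemma tendsto_dH_atTop {α : Type*} {l : Filter α} {γ : α → ℂ} (hz : 0 < z.re)
    (hre : ∀ᶠ t in l, 0 < (γ t).re) (hγ : Tendsto (fun t => ‖γ t‖) l atTop) :
    Tendsto (fun t => dH z (γ t)) l atTop := by
  refine tendsto_atTop_mono' l (hre.mono fun t ht => half_log_norm_div_le_dH hz ht) ?_
  have hz0 : 0 < ‖z‖ := norm_pos_iff.2 fun h => by simp [h] at hz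
  exact (Real.tendsto_log_atTop.comp (hγ.atTop_div_const hz0)).const_mul_atTop (by norm_num)

lemma continuousOn_dH_comp {α : Type*} [TopologicalSpace α] {s : Set α} {γ : α → ℂ}
    (hz : 0 < z.re) (hγ : ContinuousOn γ s) (hre : ∀ t ∈ s, 0 < (γ t).re) :
    ContinuousOn (fun t => dH z (γ t)) s := by
  have hρ : ContinuousOn (fun t => rhoH z (γ t)) s := by
    refine (continuous_norm.comp_continuousOn ((continuousOn_const.sub hγ).div
      (continuousOn_const.add (continuous_conj.comp_continuousOn hγ)) fun t ht => ?_))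
    rw [← normSq_pos]
    exact normSq_add_conj_pos hz (hre t ht)
  have hlt : ∀ t ∈ s, rhoH z (γ t) < 1 := fun t ht => rhoH_lt_one hz (hre t ht)
  refine continuousOn_const.mul (ContinuousOn.log ((continuousOn_const.add hρ).div
    (continuousOn_const.sub hρ) fun t ht => ?_) fun t ht => ?_)
  · exact (sub_pos.2 (hlt t ht)).ne'
  · exact (div_pos (by linarith [rhoH_nonneg z (γ t)]) (sub_pos.2 (hlt t ht))).ne'

/-- Cross-multiplied, `rhoH a w ^ 2 - rhoH a c ^ 2` is `4a` times the expression in `h`. -/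
lemma rhoH_ofReal_le_rhoH {a c : ℝ} (ha : 0 < a) (hc : 0 < c) (hw : 0 < w.re)
    (h : 0 ≤ (w.re - c) * (c * w.re - a ^ 2) + c * w.im ^ 2) :
    rhoH a c ≤ rhoH a w := by
  rw [← pow_le_pow_iff_left₀ (rhoH_nonneg _ _) (rhoH_nonneg _ _) two_ne_zero, rhoH_sq, rhoH_sq,
    div_le_div_iff₀ (normSq_add_conj_pos (by simpa using ha) (by simpa using hc))
      (normSq_add_conj_pos (by simpa using ha) hw)]
  simp only [normSq_apply, add_re, add_im, sub_re, sub_im, conj_re, conj_im, ofReal_re,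
    ofReal_im]
  nlinarith [mul_nonneg ha.le h]

end PseudoHyperbolic

lemma exists_isMinOn_Ici_of_tendsto_atTop {g : ℝ → ℝ} {a : ℝ} (hg : ContinuousOn g (Set.Ici a))
    (h : Tendsto g atTop atTop) : ∃ t ∈ Set.Ici a, IsMinOn g (Set.Ici a) t := by
  refine hg.exists_isMinOn' isClosed_Ici Set.self_mem_Ici ?_
  rw [cocompact_eq_atBot_atTop, eventually_inf_principal, eventually_sup]
  exact ⟨(eventually_lt_atBot a).mono fun t ht hmem => absurd hmem (not_le.2 ht),
    (h.eventually_ge_atTop (g a)).mono fun t ht _ => ht⟩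

lemma exists_isProjH {γ : ℝ → ℂ} {z : ℂ} (hz : 0 < z.re) (hγ : ContinuousOn γ (Set.Ici 0))
    (hre : ∀ t ≥ (0 : ℝ), 0 < (γ t).re) (hland : Tendsto (fun t => ‖γ t‖) atTop atTop) :
    ∃ p, IsProjH γ z p := by
  obtain ⟨t₀, ht₀, hmin⟩ := exists_isMinOn_Ici_of_tendsto_atTop
    (continuousOn_dH_comp hz hγ hre) (tendsto_dH_atTop hz (eventually_ge_atTop 0 |>.mono hre) hland)
  exact ⟨γ t₀, ⟨t₀, ht₀, rfl⟩, fun t ht => hmin ht⟩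

lemma tendsto_arg_of_tendsto_im_div_re {α : Type*} {l : Filter α} {γ : α → ℂ}
    (hre : ∀ᶠ t in l, 0 < (γ t).re) (h : Tendsto (fun t => (γ t).im / (γ t).re) l (𝓝 0)) :
    Tendsto (fun t => arg (γ t)) l (𝓝 0) := by
  have harg : ∀ z : ℂ, 0 < z.re → arg z = arg (1 + ((z.im / z.re : ℝ) : ℂ) * I) := by
    intro z hz
    have hz' : z = (1 + ((z.im / z.re : ℝ) : ℂ) * I) * (z.re : ℂ) :=
      Complex.ext (by simp) (by simp [div_mul_cancel₀ _ hz.ne'])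
    rw [← arg_mul_real hz (1 + _), ← hz']
  have hlim : Tendsto (fun t => 1 + (((γ t).im / (γ t).re : ℝ) : ℂ) * I) l (𝓝 1) := by
    simpa using tendsto_const_nhds.add ((continuous_ofReal.tendsto 0).comp h |>.mul_const I)
  have := (continuousAt_arg one_mem_slitPlane).tendsto.comp hlim
  rw [arg_one] at this
  exact this.congr' (hre.mono fun t ht => (harg _ ht).symm)

noncomputable def halfParabola (t : ℝ) : ℂ := ((2 * √2 + t ^ 2 : ℝ) : ℂ) + ((2 * t : ℝ) : ℂ) * I

@[simp] lemma halfParabola_re (t : ℝ) : (halfParabola t).re = 2 * √2 + t ^ 2 := by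
  simp [halfParabola, -ofReal_pow]

@[simp] lemma halfParabola_im (t : ℝ) : (halfParabola t).im = 2 * t := by
  simp [halfParabola, -ofReal_pow]

lemma halfParabola_zero : halfParabola 0 = ((2 * √2 : ℝ) : ℂ) := by
  simp [halfParabola]

lemma halfParabola_re_pos (t : ℝ) : 0 < (halfParabola t).re := by
  rw [halfParabola_re]; positivity

lemma continuous_halfParabola : Continuous halfParabola := by
  unfold halfParabola; fun_prop

lemma tendsto_norm_halfParabola : Tendsto (fun t => ‖halfParabola t‖) atTop atTop := by
  refine tendsto_atTop_mono (fun t => re_le_norm (halfParabola t)) ?_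
  simpa using tendsto_atTop_add_const_left _ (2 * √2) (tendsto_pow_atTop two_ne_zero)

lemma tendsto_arg_halfParabola : Tendsto (fun t => arg (halfParabola t)) atTop (𝓝 0) := by
  refine tendsto_arg_of_tendsto_im_div_re (.of_forall halfParabola_re_pos) ?_
  have hden : Tendsto (fun t : ℝ => 2 * √2 / t + t) atTop atTop :=
    (tendsto_const_nhds.div_atTop tendsto_id).add_atTop tendsto_id
  refine (tendsto_const_nhds (x := (2 : ℝ)) |>.div_atTop hden).congr' ?_
  filter_upwards [eventually_gt_atTop 0] with t ht
  simp only [halfParabola_re, halfParabola_im]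
  field_simp

lemma isProjH_halfParabola_zero {a : ℝ} (ha : 0 < a) (ha4 : a ≤ 4) :
    IsProjH halfParabola a (halfParabola 0) := by
  refine ⟨⟨0, le_rfl, rfl⟩, fun t _ => dH_le_dH_of_rhoH_le (by simpa using ha)
    (halfParabola_re_pos t) ?_⟩
  rw [halfParabola_zero]
  refine rhoH_ofReal_le_rhoH ha (by positivity) (halfParabola_re_pos t) ?_
  have hs : √2 ^ 2 = 2 := Real.sq_sqrt (by norm_num)
  have hs1 : 1 ≤ √2 := Real.one_le_sqrt.2 (by norm_num)
  simp only [halfParabola_re, halfParabola_im]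
  have hgap : 0 ≤ 2 * √2 * t ^ 2 + (8 + 8 * √2 - a ^ 2) := by nlinarith
  nlinarith [mul_nonneg (sq_nonneg t) hgap]

/-- for the hyperbolic map f(z) = 2z there exist a continuous curve
δ landing at ∞ with arg δ(t) → 0 and projections π_n of f^n(1) onto δ with
π₁ = π₂ = 2√2; hence {d_ℍ(1, π_n)} is not strictly increasing from the start
("eventually" cannot be omitted). -/
theorem stmt18 (f : ℂ → ℂ) (hf : f = fun z : ℂ => 2 * z) :
    ∃ δ : ℝ → ℂ, ContinuousOn δ (Set.Ici 0) ∧ (∀ t ≥ (0:ℝ), 0 < (δ t).re) ∧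
      Tendsto (fun t : ℝ => ‖δ t‖) atTop atTop ∧
      Tendsto (fun t : ℝ => (δ t).arg) atTop (𝓝 0) ∧
      ∃ p : ℕ → ℂ, (∀ n : ℕ, IsProjH δ (f^[n] 1) (p n)) ∧
        p 1 = ((2 * Real.sqrt 2 : ℝ) : ℂ) ∧ p 2 = ((2 * Real.sqrt 2 : ℝ) : ℂ) ∧
        ¬ (∀ n : ℕ, dH 1 (p n) < dH 1 (p (n+1))) := by
  subst hf
  have hiter : ∀ n : ℕ, (fun z : ℂ => 2 * z)^[n] 1 = ((2 ^ n : ℝ) : ℂ) := by simp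
  choose q hq using fun n => exists_isProjH (z := (fun z : ℂ => 2 * z)^[n] 1)
    (by rw [hiter, ofReal_re]; positivity) continuous_halfParabola.continuousOn
    (fun t _ => halfParabola_re_pos t) tendsto_norm_halfParabola
  let p : ℕ → ℂ := fun n => if n = 1 ∨ n = 2 then halfParabola 0 else q n
  refine ⟨halfParabola, continuous_halfParabola.continuousOn, fun t _ => halfParabola_re_pos t,
    tendsto_norm_halfParabola, tendsto_arg_halfParabola, p, fun n => ?_,
    halfParabola_zero, halfParabola_zero, fun h => (h 1).ne rfl⟩
  by_cases hn : n = 1 ∨ n = 2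
  · simp only [p, if_pos hn, hiter]
    rcases hn with rfl | rfl <;> exact isProjH_halfParabola_zero (by norm_num) (by norm_num)
  · simpa only [p, if_neg hn] using hq n
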